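/- Let V₈ be the Wagner graph (Möbius ladder on 8 vertices): the graph with vertex set Z/8Z in which i and j are adjacent if and only if i − j ≡ ±1 (mod 8) or i − j ≡ 4 (mod 8). Then α₂^{DP}(V₈) ≥ 6, and V₈ is partially DP-nice. -/

import Mathlib

open SimpleGraph

/-- `DPCover G H L` means `(L, H)` is a cover of the graph `G`:
(1) the sets `L u` partition `V(H)`; (2) each `H[L u]` is complete;
(3) for each edge `uv` of `G`, the edges of `H` between `L u` and `L v` form a matching;
(4) there are no edges of `H` between lists of distinct non-adjacent vertices. -/
structure DPCover {V : Type} (G : SimpleGraph V) {W : Type} (H : SimpleGraph W)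
    (L : V → Finset W) : Prop where
  partition : ∀ w : W, ∃! v : V, w ∈ L v
  cliques : ∀ v : V, ∀ a ∈ L v, ∀ b ∈ L v, a ≠ b → H.Adj a b
  matching : ∀ ⦃u v : V⦄, G.Adj u v → ∀ a ∈ L u, ∀ b ∈ L v, ∀ b' ∈ L v,
      H.Adj a b → H.Adj a b' → b = b'
  nonadj : ∀ ⦃u v : V⦄, u ≠ v → ¬ G.Adj u v → ∀ a ∈ L u, ∀ b ∈ L v, ¬ H.Adj a b

/-- A finset is independent in `H` if no two of its elements are adjacent. -/
def IsIndepFinset {W : Type} (H : SimpleGraph W) (S : Finset W) : Prop :=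
  ∀ a ∈ S, ∀ b ∈ S, ¬ H.Adj a b

/-- The independence number of `H`. -/
noncomputable def indepNum {W : Type} [Fintype W] (H : SimpleGraph W) : ℕ :=
  sSup {n : ℕ | ∃ S : Finset W, IsIndepFinset H S ∧ S.card = n}

/-- The DP-chromatic number of `G`: the least `m` such that every `m`-fold cover `(L, H)`
of `G` admits an `H`-coloring, i.e. an independent set in `H` of size `|V(G)|`. -/
noncomputable def chiDP {V : Type} [Fintype V] (G : SimpleGraph V) : ℕ :=
  sInf {m : ℕ | ∀ (W : Type) (_ : Fintype W) (H : SimpleGraph W) (L : V → Finset W),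
    DPCover G H L → (∀ v, (L v).card = m) →
    ∃ S : Finset W, IsIndepFinset H S ∧ S.card = Fintype.card V}

/-- The partial DP `t`-chromatic number of `G`: the minimum of the independence number
`α(H)` over all `t`-fold covers `(L, H)` of `G`. -/
noncomputable def alphaDP {V : Type} [Fintype V] (G : SimpleGraph V) (t : ℕ) : ℕ :=
  sInf {n : ℕ | ∃ (W : Type) (_ : Fintype W) (H : SimpleGraph W) (L : V → Finset W),
    DPCover G H L ∧ (∀ v, (L v).card = t) ∧ _root_.indepNum H = n}

/-- A graph `G` is partially DP-nice if `α_t^{DP}(G) ≥ t|V(G)|/χ_DP(G)` for all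
`t ∈ {1, …, χ_DP(G)}`. -/
def PartiallyDPNice {V : Type} [Fintype V] (G : SimpleGraph V) : Prop :=
  ∀ t : ℕ, 1 ≤ t → t ≤ chiDP G →
    (t * Fintype.card V : ℚ) / (chiDP G : ℚ) ≤ (alphaDP G t : ℚ)

/-- The Wagner graph (Möbius ladder) `V₈` on `ℤ/8ℤ`: `i` and `j` are adjacent iff
`i − j ≡ ±1 (mod 8)` or `i − j ≡ 4 (mod 8)`. -/
def wagnerGraph : SimpleGraph (ZMod 8) where
  Adj i j := i - j = 1 ∨ i - j = -1 ∨ i - j = 4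
  symm := by
    have h : ∀ i j : ZMod 8, (i - j = 1 ∨ i - j = -1 ∨ i - j = 4) →
        (j - i = 1 ∨ j - i = -1 ∨ j - i = 4) := by decide
    exact ⟨fun i j hij => h i j hij⟩
  loopless := by
    have h : ∀ i : ZMod 8, ¬ (i - i = 1 ∨ i - i = -1 ∨ i - i = 4) := by decide
    exact ⟨fun i hi => h i hi⟩

/-!
Partial DP-niceness of `V₈` amounts to `α₁ ≥ 3`, `α₂ ≥ 6`, `α₃ ≥ 8` once `χ_DP(V₈) = 3`.

`V₈` contains the 5-cycle `3-4-5-6-7`, so it is not 2-colourable, and an `H`-coloring of the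
trivial cover `G □ Kₘ` is an `m`-colouring of `G`; hence `χ_DP ≥ 3`. A 3-fold cover is coloured
greedily in the order `0, 2, 3, 7, 6, 4, 5, 1`, every vertex but `1` having at most two earlier
neighbours; the colours of the non-adjacent neighbours `0, 2` of `1` are chosen first, Brooks-style,
so that together they forbid at most one colour at `1`. This gives `χ_DP = 3` and `α₃ ≥ 8`;
`α₁ ≥ 3` comes from the independent set `{0, 2, 5}`.

For `α₂ ≥ 6`, index every list of a 2-fold cover by `ZMod 2`. The conflicts along an edge form a
matching, so they lie in `{(i, j) | i + j = s}` for a sign `s`, and a cycle can be coloured as soon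
as its signs add up to its length mod 2. The cycles `3-4-5-6-7`, `0-4-5-6-7` and `0-4-3-7` cover
every edge twice and have total length 14, so one of them can be coloured, and adding one or two
pendant vertices gives six coloured vertices.
-/

open Finset Function

section Covers

variable {V W : Type} {G : SimpleGraph V} {H : SimpleGraph W} {L : V → Finset W}

def IsPartialColoring (G : SimpleGraph V) (H : SimpleGraph W) (L : V → Finset W) (S : Finset V)
    (g : V → W) : Prop :=
  (∀ v ∈ S, g v ∈ L v) ∧ ∀ u ∈ S, ∀ v ∈ S, G.Adj u v → ¬H.Adj (g u) (g v)

def blockedColors (G : SimpleGraph V) (H : SimpleGraph W) (L : V → Finset W)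
    [DecidableRel G.Adj] [DecidableRel H.Adj] (S : Finset V) (g : V → W) (v : V) : Finset W :=
  {b ∈ L v | ∃ u ∈ S, G.Adj u v ∧ H.Adj (g u) b}

theorem DPCover.card_filter_adj_le_one (cov : DPCover G H L) [DecidableRel H.Adj] {u v : V}
    (huv : G.Adj u v) {a : W} (ha : a ∈ L u) : #{b ∈ L v | H.Adj a b} ≤ 1 :=
  card_le_one.2 fun _ hb _ hb' => cov.matching huv a ha _ (mem_filter.1 hb).1 _
    (mem_filter.1 hb').1 (mem_filter.1 hb).2 (mem_filter.1 hb').2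

theorem DPCover.exists_card_filter_adj_or_adj_le_one (cov : DPCover G H L)
    [DecidableRel H.Adj] {u v w : V} (hu : G.Adj u v) (hw : G.Adj w v) (hcard : #(L v) ≤ #(L u))
    (hLu : (L u).Nonempty) (hLw : (L w).Nonempty) :
    ∃ a ∈ L u, ∃ c ∈ L w, #{b ∈ L v | H.Adj a b ∨ H.Adj c b} ≤ 1 := by
  obtain ⟨c, hc⟩ := hLw
  suffices h : ∃ a ∈ L u, ∀ b ∈ L v, ∀ b' ∈ L v, H.Adj a b → H.Adj c b' → b = b' by
    obtain ⟨a, ha, hac⟩ := h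
    refine ⟨a, ha, c, hc, card_le_one.2 fun b hb b' hb' => ?_⟩
    obtain ⟨hb, hab | hcb⟩ := mem_filter.1 hb <;> obtain ⟨hb', hab' | hcb'⟩ := mem_filter.1 hb'
    · exact cov.matching hu a ha b hb b' hb' hab hab'
    · exact hac b hb b' hb' hab hcb'
    · exact (hac b' hb' b hb hab' hcb).symm
    · exact cov.matching hw c hc b hb b' hb' hcb hcb'
  by_cases hcz : ∃ z ∈ L v, H.Adj c z
  swap
  · push Not at hcz
    obtain ⟨a, ha⟩ := hLu
    exact ⟨a, ha, fun b _ b' hb' _ hcb' => absurd hcb' (hcz b' hb')⟩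
  obtain ⟨z, hz, hcz⟩ := hcz
  by_cases hfree : ∃ a ∈ L u, ∀ b ∈ L v, ¬H.Adj a b
  · obtain ⟨a, ha, hfree⟩ := hfree
    exact ⟨a, ha, fun b hb _ _ hab _ => absurd hab (hfree b hb)⟩
  -- Otherwise the edges between `L u` and `L v` match `L u` onto `L v`, so some `a` sees `z`.
  push Not at hfree
  choose p hp hap using hfree
  obtain ⟨a, ha, rfl⟩ := surj_on_of_inj_on_of_card_le p hp (fun a a' ha ha' h =>
    cov.matching hu.symm _ (hp a ha) a ha a' ha' (hap a ha).symm (h ▸ (hap a' ha').symm))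
    hcard z hz
  exact ⟨a, ha, fun b hb b' hb' hab hcb' =>
    (cov.matching hu a ha b hb _ hz hab (hap a ha)).trans
      (cov.matching hw c hc _ hz b' hb' hcz hcb')⟩

section Blocked

variable [DecidableRel G.Adj] [DecidableRel H.Adj] {S : Finset V} {g : V → W} {v : V}

theorem card_blockedColors_le (cov : DPCover G H L) (hS : ∀ u ∈ S, g u ∈ L u) :
    #(blockedColors G H L S g v) ≤ #{u ∈ S | G.Adj u v} := by
  classical
  have hsub : blockedColors G H L S g v ⊆
      {u ∈ S | G.Adj u v}.biUnion fun u => {b ∈ L v | H.Adj (g u) b} := by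
    intro b hb
    obtain ⟨hbv, u, hu, huv, hub⟩ := mem_filter.1 hb
    exact mem_biUnion.2 ⟨u, mem_filter.2 ⟨hu, huv⟩, mem_filter.2 ⟨hbv, hub⟩⟩
  calc #(blockedColors G H L S g v) ≤ _ := card_le_card hsub
    _ ≤ #{u ∈ S | G.Adj u v} * 1 := card_biUnion_le_card_mul _ _ _ fun u hu =>
        cov.card_filter_adj_le_one (mem_filter.1 hu).2 (hS u (mem_filter.1 hu).1)
    _ = _ := mul_one _

theorem card_blockedColors_le_add (cov : DPCover G H L) (hS : ∀ u ∈ S, g u ∈ L u)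
    [DecidableEq V] (T : Finset V) :
    #(blockedColors G H L S g v) ≤
      #(blockedColors G H L T g v) + #{u ∈ S \ T | G.Adj u v} := by
  classical
  have hsub : blockedColors G H L S g v ⊆
      blockedColors G H L T g v ∪ blockedColors G H L (S \ T) g v := by
    intro b hb
    obtain ⟨hbv, u, hu, huv, hub⟩ := mem_filter.1 hb
    by_cases huT : u ∈ T
    · exact mem_union_left _ (mem_filter.2 ⟨hbv, u, huT, huv, hub⟩)
    · exact mem_union_right _ (mem_filter.2 ⟨hbv, u, mem_sdiff.2 ⟨hu, huT⟩, huv, hub⟩)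
  calc #(blockedColors G H L S g v) ≤ _ := card_le_card hsub
    _ ≤ _ := card_union_le _ _
    _ ≤ _ := Nat.add_le_add_left
        (card_blockedColors_le cov fun u hu => hS u (mem_sdiff.1 hu).1) _

namespace IsPartialColoring

theorem exists_extend [DecidableEq V] (hg : IsPartialColoring G H L S g) (hv : v ∉ S)
    (hlt : #(blockedColors G H L S g v) < #(L v)) :
    ∃ x ∈ L v, IsPartialColoring G H L (insert v S) (update g v x) := by
  obtain ⟨x, hxv, hx⟩ := exists_mem_notMem_of_card_lt_card hlt
  have hfree : ∀ u ∈ S, G.Adj u v → ¬H.Adj (g u) x := fun u hu huv hux =>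
    hx (mem_filter.2 ⟨hxv, u, hu, huv, hux⟩)
  have hupd : ∀ u ∈ S, update g v x u = g u := fun u hu =>
    update_of_ne (ne_of_mem_of_not_mem hu hv) _ _
  refine ⟨x, hxv, fun u hu => ?_, fun u hu w hw huw => ?_⟩
  · rcases mem_insert.1 hu with rfl | hu
    · simpa using hxv
    · simpa [hupd u hu] using hg.1 u hu
  · rcases mem_insert.1 hu with rfl | hu' <;> rcases mem_insert.1 hw with rfl | hw'
    · exact absurd huw (G.loopless.irrefl _)
    · simpa [hupd w hw'] using fun h => hfree w hw' huw.symm h.symm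
    · simpa [hupd u hu'] using hfree u hu' huw
    · simpa [hupd u hu', hupd w hw'] using hg.2 u hu' w hw' huw

theorem exists_extend_of_card_lt [DecidableEq V] (cov : DPCover G H L)
    (hg : IsPartialColoring G H L S g) (hv : v ∉ S) (hlt : #{u ∈ S | G.Adj u v} < #(L v)) :
    ∃ x ∈ L v, IsPartialColoring G H L (insert v S) (update g v x) :=
  hg.exists_extend hv ((card_blockedColors_le cov hg.1).trans_lt hlt)

end IsPartialColoring

end Blocked

namespace IsPartialColoring

variable {S : Finset V} {g : V → W}

theorem of_forall_not_adj (hmem : ∀ v ∈ S, g v ∈ L v) (hS : ∀ u ∈ S, ∀ v ∈ S, ¬G.Adj u v) :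
    IsPartialColoring G H L S g :=
  ⟨hmem, fun u hu v hv huv => absurd huv (hS u hu v hv)⟩

theorem of_edges (E : List (V × V)) (hmem : ∀ v ∈ S, g v ∈ L v)
    (hE : ∀ u ∈ S, ∀ v ∈ S, G.Adj u v → (u, v) ∈ E ∨ (v, u) ∈ E)
    (hg : ∀ e ∈ E, ¬H.Adj (g e.1) (g e.2)) : IsPartialColoring G H L S g :=
  ⟨hmem, fun u hu v hv huv => (hE u hu v hv huv).elim (hg _) fun h hadj => hg _ h hadj.symm⟩

theorem exists_isIndepFinset (cov : DPCover G H L) (hg : IsPartialColoring G H L S g) :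
    ∃ I : Finset W, IsIndepFinset H I ∧ #I = #S := by
  classical
  refine ⟨S.image g, ?_, card_image_of_injOn fun u hu v hv huv => ?_⟩
  · simp only [IsIndepFinset, mem_image]
    rintro _ ⟨u, hu, rfl⟩ _ ⟨v, hv, rfl⟩ hadj
    by_cases huv : u = v
    · subst huv; exact H.loopless.irrefl _ hadj
    by_cases hG : G.Adj u v
    · exact hg.2 u hu v hv hG hadj
    · exact cov.nonadj huv hG _ (hg.1 u hu) _ (hg.1 v hv) hadj
  · obtain ⟨w, -, hw⟩ := cov.partition (g u)
    exact (hw u (hg.1 u hu)).trans (hw v (huv ▸ hg.1 v hv)).symm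

end IsPartialColoring

theorem DPCover.exists_sign (cov : DPCover G H L) {u v : V} (huv : G.Adj u v)
    {p q : ZMod 2 → W} (hp : ∀ i, p i ∈ L u) (hq : ∀ j, q j ∈ L v) (hpi : Injective p)
    (hqi : Injective q) : ∃ s : ZMod 2, ∀ i j, i + j ≠ s → ¬H.Adj (p i) (q j) := by
  have key : ∀ i j i₀ j₀ : ZMod 2, (i = i₀ → j = j₀) → (j = j₀ → i = i₀) → i + j = i₀ + j₀ := by
    decide
  by_cases h : ∃ i j, H.Adj (p i) (q j)
  · obtain ⟨i₀, j₀, h₀⟩ := h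
    refine ⟨i₀ + j₀, fun i j hne hij => hne (key i j i₀ j₀ ?_ ?_)⟩
    · rintro rfl; exact hqi (cov.matching huv _ (hp i) _ (hq j) _ (hq j₀) hij h₀)
    · rintro rfl; exact hpi (cov.matching huv.symm _ (hq j) _ (hp i) _ (hp i₀) hij.symm h₀.symm)
  · push Not at h
    exact ⟨0, fun i j _ => h i j⟩

theorem DPCover.exists_signed_labelling (cov : DPCover G H L) (hL : ∀ v, #(L v) = 2) :
    ∃ lab : V → ZMod 2 → W, (∀ v i, lab v i ∈ L v) ∧ ∀ ⦃u v⦄, G.Adj u v →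
      ∃ s : ZMod 2, ∀ i j, i + j ≠ s → ¬H.Adj (lab u i) (lab v j) := by
  let lab : V → ZMod 2 → W := fun v i => ((L v).equivFinOfCardEq (hL v)).symm i
  have hlab : ∀ v i, lab v i ∈ L v := fun v i => Subtype.prop _
  have hinj : ∀ v, Injective (lab v) := fun v => Subtype.val_injective.comp (Equiv.injective _)
  exact ⟨lab, hlab, fun u v huv => cov.exists_sign huv (hlab u) (hlab v) (hinj u) (hinj v)⟩

end Covers

theorem dpCover_boxProd_top {V : Type} (G : SimpleGraph V) (α : Type) [Fintype α] :
    DPCover G (G □ (⊤ : SimpleGraph α)) fun v => {v} ×ˢ univ where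
  partition w := ⟨w.1, by simp, fun v hv => by
    simp only [mem_product, mem_singleton] at hv; exact hv.1.symm⟩
  cliques v a ha b hb hab := by
    simp only [mem_product, mem_singleton] at ha hb
    exact Or.inr ⟨fun h => hab (Prod.ext (ha.1.trans hb.1.symm) h), ha.1.trans hb.1.symm⟩
  matching u v huv a ha b hb b' hb' hab hab' := by
    simp only [mem_product, mem_singleton] at ha hb hb'
    have hne : a.1 ≠ b.1 := ha.1 ▸ hb.1 ▸ G.ne_of_adj huv
    rcases hab with ⟨-, h⟩ | ⟨-, h⟩
    · rcases hab' with ⟨-, h'⟩ | ⟨-, h'⟩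
      · exact Prod.ext (hb.1.trans hb'.1.symm) (h.symm.trans h')
      · exact absurd h' (hb'.1 ▸ hb.1 ▸ hne)
    · exact absurd h hne
  nonadj u v huv hG a ha b hb hab := by
    simp only [mem_product, mem_singleton] at ha hb
    rcases hab with ⟨h, -⟩ | ⟨-, h⟩
    · exact hG (ha.1 ▸ hb.1 ▸ h)
    · exact huv (ha.1 ▸ hb.1 ▸ h)

section ChromaticNumbers

variable {V : Type} [Fintype V]

def IsDPColorable (G : SimpleGraph V) (m : ℕ) : Prop :=
  ∀ (W : Type) (_ : Fintype W) (H : SimpleGraph W) (L : V → Finset W),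
    DPCover G H L → (∀ v, #(L v) = m) →
    ∃ S : Finset W, IsIndepFinset H S ∧ #S = Fintype.card V

theorem IsDPColorable.colorable {G : SimpleGraph V} {m : ℕ} (hG : IsDPColorable G m) :
    G.Colorable m := by
  classical
  obtain ⟨S, hS, hcard⟩ := hG _ inferInstance _ _ (dpCover_boxProd_top G (Fin m))
    (fun v => by simp)
  have hinj : Set.InjOn Prod.fst (S : Set (V × Fin m)) := fun x hx y hy hxy =>
    by_contra fun hne => hS x hx y hy (Or.inr ⟨fun h => hne (Prod.ext hxy h), hxy⟩)
  have himage : S.image Prod.fst = univ :=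
    eq_univ_of_card _ ((card_image_of_injOn hinj).trans hcard)
  have hcolor : ∀ v, ∃ i, (v, i) ∈ S := fun v => by
    obtain ⟨x, hx, rfl⟩ := mem_image.1 (himage ▸ mem_univ v)
    exact ⟨x.2, hx⟩
  choose c hc using hcolor
  exact ⟨SimpleGraph.Coloring.mk c fun {u v} huv hcuv =>
    hS _ (hc u) _ (hc v) (Or.inl ⟨huv, hcuv⟩)⟩

theorem chiDP_eq {G : SimpleGraph V} {k : ℕ} (hk : IsDPColorable G k)
    (hlt : ∀ m < k, ¬G.Colorable m) : chiDP G = k :=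
  le_antisymm (Nat.sInf_le hk) <| le_csInf ⟨k, hk⟩ fun m hm =>
    not_lt.1 fun hmk => hlt m hmk (IsDPColorable.colorable hm)

theorem le_indepNum {W : Type} [Fintype W] {H : SimpleGraph W} {S : Finset W}
    (hS : IsIndepFinset H S) : #S ≤ _root_.indepNum H :=
  le_csSup ⟨Fintype.card W, fun _ ⟨T, _, hT⟩ => hT ▸ card_le_univ T⟩ ⟨S, hS, rfl⟩

theorem le_alphaDP {G : SimpleGraph V} {t m : ℕ}
    (h : ∀ (W : Type) (_ : Fintype W) (H : SimpleGraph W) (L : V → Finset W),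
      DPCover G H L → (∀ v, #(L v) = t) → ∃ S : Finset W, IsIndepFinset H S ∧ #S = m) :
    m ≤ alphaDP G t := by
  obtain ⟨W, hW, H, L, cov, hL, hα⟩ := Nat.sInf_mem (s := {n | ∃ (W : Type) (_ : Fintype W)
      (H : SimpleGraph W) (L : V → Finset W), DPCover G H L ∧ (∀ v, #(L v) = t) ∧
        _root_.indepNum H = n})
    ⟨_, _, inferInstance, _, _, dpCover_boxProd_top G (Fin t), fun v => by simp, rfl⟩
  obtain ⟨S, hS, rfl⟩ := h W hW H L cov hL
  exact (le_indepNum hS).trans hα.le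

end ChromaticNumbers

theorem exists_labelling_five_cycle_of_sum_eq_one :
    ∀ a b c d e : ZMod 2, a + b + c + d + e = 1 → ∃ x₁ x₂ x₃ x₄ x₅ : ZMod 2,
      x₁ + x₂ ≠ a ∧ x₂ + x₃ ≠ b ∧ x₃ + x₄ ≠ c ∧ x₄ + x₅ ≠ d ∧ x₅ + x₁ ≠ e := by
  decide

theorem exists_labelling_four_cycle_of_sum_eq_zero :
    ∀ a b c d : ZMod 2, a + b + c + d = 0 → ∃ x₁ x₂ x₃ x₄ : ZMod 2,
      x₁ + x₂ ≠ a ∧ x₂ + x₃ ≠ b ∧ x₃ + x₄ ≠ c ∧ x₄ + x₁ ≠ d := by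
  decide

theorem wagnerGraph_cycle_sign_sums (s₃₄ s₄₅ s₅₆ s₆₇ s₇₃ s₀₄ s₇₀ : ZMod 2) :
    s₃₄ + s₄₅ + s₅₆ + s₆₇ + s₇₃ = 1 ∨ s₀₄ + s₄₅ + s₅₆ + s₆₇ + s₇₀ = 1 ∨
      s₀₄ + s₃₄ + s₇₃ + s₇₀ = 0 := by
  have h2 : (2 : ZMod 2) = 0 := rfl
  have hsum : (s₃₄ + s₄₅ + s₅₆ + s₆₇ + s₇₃) + (s₀₄ + s₄₅ + s₅₆ + s₆₇ + s₇₀) +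
      (s₀₄ + s₃₄ + s₇₃ + s₇₀) = 0 := by
    linear_combination (s₃₄ + s₄₅ + s₅₆ + s₆₇ + s₇₃ + s₀₄ + s₇₀) * h2
  have hcases : ∀ x y z : ZMod 2, x + y + z = 0 → x = 1 ∨ y = 1 ∨ z = 0 := by decide
  exact hcases _ _ _ hsum

instance : DecidableRel wagnerGraph.Adj := fun i j =>
  inferInstanceAs (Decidable (i - j = 1 ∨ i - j = -1 ∨ i - j = 4))

theorem wagnerGraph_not_colorable_two : ¬wagnerGraph.Colorable 2 := by
  rintro ⟨c⟩
  have hcycle : ∀ a b d e f : Fin 2, ¬(a ≠ b ∧ b ≠ d ∧ d ≠ e ∧ e ≠ f ∧ f ≠ a) := by decide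
  exact hcycle (c 3) (c 4) (c 5) (c 6) (c 7) ⟨c.valid (by decide), c.valid (by decide),
    c.valid (by decide), c.valid (by decide), c.valid (by decide)⟩

section Wagner

variable {W : Type} {H : SimpleGraph W} {L : ZMod 8 → Finset W}

theorem wagnerGraph_isDPColorable_three : IsDPColorable wagnerGraph 3 := by
  intro W _ H L cov hL
  classical
  have hne : ∀ v, (L v).Nonempty := fun v => card_pos.1 (by rw [hL]; norm_num)
  obtain ⟨a, ha, c, hc, hac⟩ := cov.exists_card_filter_adj_or_adj_le_one
    (u := 0) (v := 1) (w := 2) (by decide) (by decide) (by rw [hL, hL]) (hne 0) (hne 2)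
  let g₀ : ZMod 8 → W := fun v => if v = 2 then c else a
  have h02 : IsPartialColoring wagnerGraph H L {0, 2} g₀ :=
    .of_forall_not_adj (by simp [g₀, ha, hc, show (0 : ZMod 8) ≠ 2 by decide]) (by decide)
  obtain ⟨x₃, -, h3⟩ := h02.exists_extend_of_card_lt cov (v := 3) (by decide) (by rw [hL]; decide)
  obtain ⟨x₇, -, h7⟩ := h3.exists_extend_of_card_lt cov (v := 7) (by decide) (by rw [hL]; decide)
  obtain ⟨x₆, -, h6⟩ := h7.exists_extend_of_card_lt cov (v := 6) (by decide) (by rw [hL]; decide)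
  obtain ⟨x₄, -, h4⟩ := h6.exists_extend_of_card_lt cov (v := 4) (by decide) (by rw [hL]; decide)
  obtain ⟨x₅, -, h5⟩ := h4.exists_extend_of_card_lt cov (v := 5) (by decide) (by rw [hL]; decide)
  have hblocked : #(blockedColors wagnerGraph H L {5, 4, 6, 7, 3, 0, 2} _ 1) < #(L 1) :=
    calc _ ≤ _ + #{u ∈ ({5, 4, 6, 7, 3, 0, 2} : Finset (ZMod 8)) \ {0, 2} | wagnerGraph.Adj u 1} :=
          card_blockedColors_le_add cov h5.1 {0, 2}
      _ ≤ 1 + 1 := by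
          refine add_le_add (le_trans (card_le_card fun b hb => ?_) hac) (by decide)
          simpa +decide [blockedColors, update_apply, g₀] using hb
      _ < #(L 1) := by rw [hL]; norm_num
  obtain ⟨x₁, -, h1⟩ := h5.exists_extend (v := 1) (by decide) hblocked
  obtain ⟨I, hI, hcard⟩ := h1.exists_isIndepFinset cov
  exact ⟨I, hI, hcard.trans (by decide)⟩

theorem wagnerGraph_exists_isIndepFinset_of_card_eq_one (cov : DPCover wagnerGraph H L)
    (hL : ∀ v, #(L v) = 1) : ∃ I : Finset W, IsIndepFinset H I ∧ #I = 3 := by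
  have hne : ∀ v, (L v).Nonempty := fun v => card_pos.1 (by rw [hL]; norm_num)
  exact (IsPartialColoring.of_forall_not_adj (S := {0, 2, 5}) (fun v _ => (hne v).choose_spec)
    (by decide)).exists_isIndepFinset cov

theorem wagnerGraph_exists_isIndepFinset_of_card_eq_two (cov : DPCover wagnerGraph H L)
    (hL : ∀ v, #(L v) = 2) : ∃ I : Finset W, IsIndepFinset H I ∧ #I = 6 := by
  classical
  obtain ⟨lab, hlab, sign⟩ := cov.exists_signed_labelling hL
  obtain ⟨s₃₄, h₃₄⟩ := sign (u := 3) (v := 4) (by decide)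
  obtain ⟨s₄₅, h₄₅⟩ := sign (u := 4) (v := 5) (by decide)
  obtain ⟨s₅₆, h₅₆⟩ := sign (u := 5) (v := 6) (by decide)
  obtain ⟨s₆₇, h₆₇⟩ := sign (u := 6) (v := 7) (by decide)
  obtain ⟨s₇₃, h₇₃⟩ := sign (u := 7) (v := 3) (by decide)
  obtain ⟨s₀₄, h₀₄⟩ := sign (u := 0) (v := 4) (by decide)
  obtain ⟨s₇₀, h₇₀⟩ := sign (u := 7) (v := 0) (by decide)
  rcases wagnerGraph_cycle_sign_sums s₃₄ s₄₅ s₅₆ s₆₇ s₇₃ s₀₄ s₇₀ with h | h | h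
  · obtain ⟨x₃, x₄, x₅, x₆, x₇, e₃₄, e₄₅, e₅₆, e₆₇, e₇₃⟩ :=
      exists_labelling_five_cycle_of_sum_eq_one _ _ _ _ _ h
    have hC : IsPartialColoring wagnerGraph H L {3, 4, 5, 6, 7}
        (fun v => lab v (![0, 0, 0, x₃, x₄, x₅, x₆, x₇] v)) :=
      .of_edges [(3, 4), (4, 5), (5, 6), (6, 7), (7, 3)] (fun v _ => hlab v _) (by decide)
        (by simpa using ⟨h₃₄ _ _ e₃₄, h₄₅ _ _ e₄₅, h₅₆ _ _ e₅₆, h₆₇ _ _ e₆₇, h₇₃ _ _ e₇₃⟩)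
    obtain ⟨_, -, hC₁⟩ := hC.exists_extend_of_card_lt cov (v := 1) (by decide) (by rw [hL]; decide)
    exact hC₁.exists_isIndepFinset cov
  · obtain ⟨x₀, x₄, x₅, x₆, x₇, e₀₄, e₄₅, e₅₆, e₆₇, e₇₀⟩ :=
      exists_labelling_five_cycle_of_sum_eq_one _ _ _ _ _ h
    have hC : IsPartialColoring wagnerGraph H L {0, 4, 5, 6, 7}
        (fun v => lab v (![x₀, 0, 0, 0, x₄, x₅, x₆, x₇] v)) :=
      .of_edges [(0, 4), (4, 5), (5, 6), (6, 7), (7, 0)] (fun v _ => hlab v _) (by decide)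
        (by simpa using ⟨h₀₄ _ _ e₀₄, h₄₅ _ _ e₄₅, h₅₆ _ _ e₅₆, h₆₇ _ _ e₆₇, h₇₀ _ _ e₇₀⟩)
    obtain ⟨_, -, hC₂⟩ := hC.exists_extend_of_card_lt cov (v := 2) (by decide) (by rw [hL]; decide)
    exact hC₂.exists_isIndepFinset cov
  · obtain ⟨x₀, x₄, x₃, x₇, e₀₄, e₄₃, e₃₇, e₇₀⟩ :=
      exists_labelling_four_cycle_of_sum_eq_zero _ _ _ _ h
    have hC : IsPartialColoring wagnerGraph H L {0, 3, 4, 7}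
        (fun v => lab v (![x₀, 0, 0, x₃, x₄, 0, 0, x₇] v)) :=
      .of_edges [(0, 4), (3, 4), (7, 3), (7, 0)] (fun v _ => hlab v _) (by decide)
        (by simpa using ⟨h₀₄ _ _ e₀₄, h₃₄ _ _ (by rwa [add_comm]), h₇₃ _ _ (by rwa [add_comm]),
          h₇₀ _ _ e₇₀⟩)
    obtain ⟨_, -, hC₁⟩ := hC.exists_extend_of_card_lt cov (v := 1) (by decide) (by rw [hL]; decide)
    obtain ⟨_, -, hC₁₆⟩ := hC₁.exists_extend_of_card_lt cov (v := 6) (by decide)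
      (by rw [hL]; decide)
    exact hC₁₆.exists_isIndepFinset cov

end Wagner

theorem wagnerGraph_chiDP : chiDP wagnerGraph = 3 :=
  chiDP_eq wagnerGraph_isDPColorable_three fun _ hm hcol =>
    wagnerGraph_not_colorable_two (hcol.mono (by omega))

/-- `α₂^{DP}(V₈) ≥ 6`, and `V₈` is partially DP-nice. -/
theorem wagnerGraph_partiallyDPNice :
    6 ≤ alphaDP wagnerGraph 2 ∧ PartiallyDPNice wagnerGraph := by
  have h₁ : (3 : ℚ) ≤ alphaDP wagnerGraph 1 := by
    exact_mod_cast le_alphaDP fun _ _ _ _ cov hL =>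
      wagnerGraph_exists_isIndepFinset_of_card_eq_one cov hL
  have h₂ : 6 ≤ alphaDP wagnerGraph 2 := le_alphaDP fun _ _ _ _ cov hL =>
    wagnerGraph_exists_isIndepFinset_of_card_eq_two cov hL
  have h₃ : (8 : ℚ) ≤ alphaDP wagnerGraph 3 := by
    exact_mod_cast le_alphaDP wagnerGraph_isDPColorable_three
  have h₂' : (6 : ℚ) ≤ alphaDP wagnerGraph 2 := by exact_mod_cast h₂
  refine ⟨h₂, fun t ht₁ ht₃ => ?_⟩
  rw [wagnerGraph_chiDP] at ht₃ ⊢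
  rw [ZMod.card]
  interval_cases t <;> linarith
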